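/- arXiv:1604.03312 — 3 statements merged into one kernel-verified Lean document; each statement's English description precedes it below -/
import Mathlib

section
/- For n = 2, the Hausdorff pseudo-distance equals the symmetrized pseudo-distance: dist_H(a,b) = dist_S(a,b) for all a, b ∈ R^{2d}. -/
/-!
The Hausdorff distance of two pairs is the largest of the four distances from a point of one
pair to the nearer point of the other. Expanding by distributivity, this maximum of minima is the
minimum, over the two matchings of the pairs, of the larger matched distance.
-/

theorem sup_inf_sup_eq {α : Type*} [DistribLattice α] (p q r s : α) :
    (p ⊔ s) ⊓ (r ⊔ q) = (p ⊓ q ⊔ r ⊓ s) ⊔ (p ⊓ r ⊔ q ⊓ s) := by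
  simp only [inf_sup_left, inf_sup_right]
  ac_rfl

theorem Set.range_fin_two {α : Type*} (f : Fin 2 → α) : Set.range f = {f 0, f 1} := by
  ext x
  simp [Fin.exists_fin_two, eq_comm]

namespace Metric

variable {X : Type*}

theorem infEDist_pair [PseudoEMetricSpace X] (x y₀ y₁ : X) :
    infEDist x {y₀, y₁} = min (edist x y₀) (edist x y₁) := by
  rw [Set.insert_eq, infEDist_union, infEDist_singleton, infEDist_singleton]

theorem hausdorffEDist_pair_pair [PseudoEMetricSpace X] (x₀ x₁ y₀ y₁ : X) :
    hausdorffEDist {x₀, x₁} {y₀, y₁} =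
      min (max (edist x₀ y₀) (edist x₁ y₁)) (max (edist x₁ y₀) (edist x₀ y₁)) := by
  rw [hausdorffEDist, iSup_pair, iSup_pair, infEDist_pair, infEDist_pair, infEDist_pair,
    infEDist_pair, edist_comm y₀, edist_comm y₀, edist_comm y₁, edist_comm y₁]
  exact (sup_inf_sup_eq (edist x₀ y₀) (edist x₀ y₁) (edist x₁ y₀) (edist x₁ y₁)).symm

theorem hausdorffDist_pair_pair [PseudoMetricSpace X] (x₀ x₁ y₀ y₁ : X) :
    hausdorffDist {x₀, x₁} {y₀, y₁} =
      min (max (dist x₀ y₀) (dist x₁ y₁)) (max (dist x₁ y₀) (dist x₀ y₁)) := by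
  simp only [hausdorffDist, hausdorffEDist_pair_pair, dist_edist]
  rw [ENNReal.toReal_min, ENNReal.toReal_max, ENNReal.toReal_max] <;> finiteness

end Metric

/-- For two particles (`n = 2`), the Hausdorff pseudo-distance between the coordinate
sets `{a 0, a 1}` and `{b 0, b 1}` (with the sup-norm on `ℝ^d`) equals the symmetrized
pseudo-distance
`min (max ‖a 0 - b 0‖ ‖a 1 - b 1‖) (max ‖a 1 - b 0‖ ‖a 0 - b 1‖)`. -/
theorem hausdorff_eq_distS_two_particles {d : ℕ} (a b : Fin 2 → Fin d → ℝ) :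
    Metric.hausdorffDist (Set.range a) (Set.range b)
      = min (max ‖a 0 - b 0‖ ‖a 1 - b 1‖) (max ‖a 1 - b 0‖ ‖a 0 - b 1‖) := by
  simp only [Set.range_fin_two, Metric.hausdorffDist_pair_pair, dist_eq_norm]
end

section
/- Let x = (x_1,x_2), y = (y_1,y_2) ∈ R^{2d}. If dist_S(x,y) > L, then the pair of symmetrized two-particle boxes Λ_{S;L}(x) and Λ_{S;L}(y) is partially separated: there exists j ∈ {1,2} such that either Λ_L(x_j) ∩ (Λ_L(y_1) ∪ Λ_L(y_2)) = ∅ or Λ_L(y_j) ∩ (Λ_L(x_1) ∪ Λ_L(x_2)) = ∅. -/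
/-- The one-particle box of side `L` centered at `z ∈ ℝ^d`, as a set of points of `ℤ^d`. -/
def boxd {d : ℕ} (L : ℝ) (z : Fin d → ℝ) : Set (Fin d → ℤ) :=
  {u | ‖(fun j => (u j : ℝ)) - z‖ ≤ L / 2}

/-- The symmetrized distance on `(ℝ^d)^2`. -/
noncomputable def distS2 {d : ℕ} (x y : Fin 2 → Fin d → ℝ) : ℝ :=
  min (max ‖x 0 - y 0‖ ‖x 1 - y 1‖) (max ‖x 0 - y 1‖ ‖x 1 - y 0‖)

lemma boxd_disjoint {d : ℕ} {L : ℝ} {a b : Fin d → ℝ} (h : L < ‖a - b‖) :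
    boxd L a ∩ boxd L b = ∅ := by
  ext u
  simp only [Set.mem_inter_iff, Set.mem_empty_iff_false, iff_false, boxd, Set.mem_setOf_eq]
  rintro ⟨ha, hb⟩
  have : ‖a - b‖ ≤ ‖(fun j => (u j : ℝ)) - a‖ + ‖(fun j => (u j : ℝ)) - b‖ := by
    have := norm_sub_le ((fun j => (u j : ℝ)) - a) ((fun j => (u j : ℝ)) - b)
    simpa [norm_sub_rev, sub_sub_sub_cancel_left] using this
  linarith

/-- If `dist_S(x,y) > L`, then the symmetrized two-particle boxes `Λ_{S;L}(x)` and
`Λ_{S;L}(y)` are partially separated: there exists `j ∈ {1,2}` such that either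
`Λ_L(x_j) ∩ (Λ_L(y_1) ∪ Λ_L(y_2)) = ∅` or `Λ_L(y_j) ∩ (Λ_L(x_1) ∪ Λ_L(x_2)) = ∅`. -/
theorem partially_separated_of_distS_gt {d : ℕ} (L : ℝ) (x y : Fin 2 → Fin d → ℝ)
    (h : distS2 x y > L) :
    ∃ j : Fin 2,
      boxd L (x j) ∩ (boxd L (y 0) ∪ boxd L (y 1)) = ∅ ∨
      boxd L (y j) ∩ (boxd L (x 0) ∪ boxd L (x 1)) = ∅ := by
  rw [distS2, gt_iff_lt, lt_min_iff, lt_max_iff, lt_max_iff] at h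
  obtain ⟨h1 | h2, h3 | h4⟩ := h
  · exact ⟨0, Or.inl (by rw [Set.inter_union_distrib_left, boxd_disjoint h1,
      boxd_disjoint h3, Set.union_empty])⟩
  · refine ⟨0, Or.inr ?_⟩
    rw [Set.inter_union_distrib_left, Set.inter_comm, boxd_disjoint h1, Set.inter_comm,
      boxd_disjoint h4, Set.union_empty]
  · refine ⟨1, Or.inr ?_⟩
    rw [Set.inter_union_distrib_left, Set.inter_comm, boxd_disjoint h3, Set.inter_comm,
      boxd_disjoint h2, Set.union_empty]
  · exact ⟨1, Or.inl (by rw [Set.inter_union_distrib_left, boxd_disjoint h4,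
      boxd_disjoint h2, Set.union_empty])⟩
end

section
/- Let M_v be multiplication by e^{v·x} and U_v multiplication by e^{−v·x} on ℓ²(S), S ⊂ Z^d, v ∈ R^d. Define B_v on ℓ²(S) by (B_v ψ)(x) = Σ_{j=1,...,2d; x+e_j ∈ S} (e^{−v·e_j} − 1) ψ(x + e_j), where e_{d+j} = −e_j. Then M_v (−Δ_S) U_v = −Δ_S − B_v as operators on ℓ²(S), and the operator norm of B_v satisfies ‖B_v‖ ≤ 2d (e^{‖v‖_∞} − 1). -/
/-- The nearest neighbor of `x ∈ ℤ^d` in direction `j`, with sign `s`. -/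
def step {d : ℕ} (x : Fin d → ℤ) (j : Fin d) (s : Bool) : Fin d → ℤ :=
  fun i => x i + (if i = j then (if s then 1 else -1) else 0)

/-- The signed standard basis vector `e_j` (for `s = true`) or `-e_j` (for `s = false`). -/
def stepdir {d : ℕ} (j : Fin d) (s : Bool) : Fin d → ℤ :=
  fun i => if i = j then (if s then 1 else -1) else 0

/-- Euclidean inner product of `v ∈ ℝ^d` with an integer vector. -/
def vdot {d : ℕ} (v : Fin d → ℝ) (x : Fin d → ℤ) : ℝ := ∑ i, v i * (x i : ℝ)

lemma vdot_step {d : ℕ} (v : Fin d → ℝ) (x : Fin d → ℤ) (j : Fin d) (s : Bool) :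
    vdot v (step x j s) = vdot v x + vdot v (stepdir j s) := by
  unfold vdot step stepdir
  rw [← Finset.sum_add_distrib]
  refine Finset.sum_congr rfl fun i _ => ?_
  split_ifs <;> push_cast <;> ring

lemma vdot_stepdir {d : ℕ} (v : Fin d → ℝ) (j : Fin d) (s : Bool) :
    vdot v (stepdir j s) = if s then v j else -v j := by
  unfold vdot stepdir
  rw [Finset.sum_eq_single j]
  · cases s <;> simp
  · intro i _ hij; simp [hij]
  · simp

lemma abs_exp_sub_one_le {t M : ℝ} (h : |t| ≤ M) : |Real.exp t - 1| ≤ Real.exp M - 1 := by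
  rcases abs_le.1 h with ⟨h1, h2⟩
  rcases le_or_gt 0 (Real.exp t - 1) with h0 | h0
  · rw [abs_of_nonneg h0]
    have := Real.exp_le_exp.2 h2
    linarith
  · rw [abs_of_neg h0]
    have e1 : Real.exp (-M) ≤ Real.exp t := Real.exp_le_exp.2 (by linarith)
    have e2 := Real.add_one_le_exp (-M)
    have e3 := Real.add_one_le_exp M
    linarith

lemma coeff_bound {d : ℕ} (v : Fin d → ℝ) (j : Fin d) (s : Bool) :
    ‖Complex.exp (-(vdot v (stepdir j s) : ℝ)) - 1‖ ≤ Real.exp ‖v‖ - 1 := by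
  rw [← Complex.ofReal_neg, ← Complex.ofReal_exp, ← Complex.ofReal_one, ← Complex.ofReal_sub,
    Complex.norm_real, Real.norm_eq_abs]
  apply abs_exp_sub_one_le
  rw [abs_neg, vdot_stepdir]
  have h := norm_le_pi_norm v j
  rw [Real.norm_eq_abs] at h
  cases s <;> simpa [abs_neg] using h

lemma step_inj {d : ℕ} (j : Fin d) (s : Bool) :
    Function.Injective (fun x : Fin d → ℤ => step x j s) := by
  intro x y h
  funext i
  have := congrFun h i
  simpa [step] using this

/-- Conjugating the restricted discrete Laplacian by the exponential weights
`M_v = e^{v·x}`, `U_v = e^{-v·x}` gives `M_v (-Δ_S) U_v = -Δ_S - B_v`, where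
`(B_v ψ)(x) = Σ_{j, x+e_j ∈ S} (e^{-v·e_j} - 1) ψ(x+e_j)`; moreover the operator
norm of `B_v` on `ℓ²(S)` satisfies `‖B_v‖ ≤ 2d (e^{‖v‖_∞} - 1)`. -/
theorem conjugated_laplacian_and_B_norm {d : ℕ} (S : Set (Fin d → ℤ))
    [∀ u, Decidable (u ∈ S)] (v : Fin d → ℝ)
    (Mv Uv Δ' Bv : (S → ℂ) →ₗ[ℂ] (S → ℂ))
    (hM : ∀ ψ x, Mv ψ x = Complex.exp (vdot v (x : Fin d → ℤ)) * ψ x)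
    (hU : ∀ ψ x, Uv ψ x = Complex.exp (-vdot v (x : Fin d → ℤ)) * ψ x)
    (hΔ : ∀ ψ x, Δ' ψ x =
      -(∑ j : Fin d, ∑ s : Bool,
          if h : step (x : Fin d → ℤ) j s ∈ S then ψ ⟨_, h⟩ else 0))
    (hB : ∀ ψ x, Bv ψ x =
      ∑ j : Fin d, ∑ s : Bool,
        if h : step (x : Fin d → ℤ) j s ∈ S then
          (Complex.exp (-(vdot v (stepdir j s))) - 1) * ψ ⟨_, h⟩ else 0)
    (Bv' : lp (fun _ : S => ℂ) 2 →L[ℂ] lp (fun _ : S => ℂ) 2)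
    (hB' : ∀ ψ : lp (fun _ : S => ℂ) 2, ∀ x : S,
      (Bv' ψ : ∀ _ : S, ℂ) x =
        ∑ j : Fin d, ∑ s : Bool,
          if h : step (x : Fin d → ℤ) j s ∈ S then
            (Complex.exp (-(vdot v (stepdir j s))) - 1) * (ψ : ∀ _ : S, ℂ) ⟨_, h⟩
          else 0) :
    Mv ∘ₗ Δ' ∘ₗ Uv = Δ' - Bv ∧ ‖Bv'‖ ≤ 2 * d * (Real.exp ‖v‖ - 1) := by
  constructor
  · ext ψ x
    simp only [LinearMap.comp_apply, LinearMap.sub_apply, Pi.sub_apply, hM, hΔ, hU, hB]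
    rw [sub_eq_add_neg, ← neg_add, mul_neg]
    congr 1
    rw [Finset.mul_sum, ← Finset.sum_add_distrib]
    refine Finset.sum_congr rfl fun j _ => ?_
    rw [Finset.mul_sum, ← Finset.sum_add_distrib]
    refine Finset.sum_congr rfl fun s _ => ?_
    split_ifs with h
    · rw [vdot_step, ← mul_assoc, ← Complex.exp_add]
      have harg : (vdot v (x : Fin d → ℤ) : ℂ) +
          -(((vdot v (x : Fin d → ℤ) + vdot v (stepdir j s) : ℝ)) : ℂ)
          = -((vdot v (stepdir j s) : ℝ) : ℂ) := by
        push_cast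
        ring
      rw [harg]
      ring
    · simp
  · classical
    have hC0 : (0:ℝ) ≤ Real.exp ‖v‖ - 1 := by
      have := Real.one_le_exp (norm_nonneg v); linarith
    refine ContinuousLinearMap.opNorm_le_bound _
      (mul_nonneg (by positivity) hC0) fun ψ => ?_
    set q : ℝ := (2 : ENNReal).toReal with hqdef
    have hq2 : q = (2:ℝ) := by norm_num [hqdef]
    have hq : (0:ℝ) < q := by rw [hq2]; norm_num
    set c : Fin d → Bool → ℂ :=
      fun j s => Complex.exp (-(vdot v (stepdir j s) : ℝ)) - 1 with hcdef
    set g : Fin d → Bool → (S → ℂ) := fun j s x =>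
      if h : step (x : Fin d → ℤ) j s ∈ S then c j s * (ψ : ∀ _ : S, ℂ) ⟨_, h⟩ else 0
      with hgdef
    have hψsum : Summable (fun y : S => ‖(ψ : ∀ _ : S, ℂ) y‖ ^ q) :=
      (lp.memℓp ψ).summable hq
    have einj : ∀ (j : Fin d) (s : Bool),
        Function.Injective
          (fun t : {x : S // step (x : Fin d → ℤ) j s ∈ S} =>
            (⟨step ((t.1 : S) : Fin d → ℤ) j s, t.2⟩ : S)) := by
      intro j s t u h
      have h1 : step ((t.1 : S) : Fin d → ℤ) j s = step ((u.1 : S) : Fin d → ℤ) j s :=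
        congrArg Subtype.val h
      exact Subtype.ext (Subtype.ext (step_inj j s h1))
    have hgt : ∀ (j : Fin d) (s : Bool) (t : {x : S // step (x : Fin d → ℤ) j s ∈ S}),
        ‖g j s t.1‖ ^ q = ‖c j s‖ ^ q *
          ‖(ψ : ∀ _ : S, ℂ) ⟨step ((t.1 : S) : Fin d → ℤ) j s, t.2⟩‖ ^ q := by
      intro j s t
      have : g j s t.1 = c j s * (ψ : ∀ _ : S, ℂ) ⟨step ((t.1 : S) : Fin d → ℤ) j s, t.2⟩ :=
        dif_pos t.2
      rw [this, norm_mul, Real.mul_rpow (norm_nonneg _) (norm_nonneg _)]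
    have hsum : ∀ (j : Fin d) (s : Bool), Summable (fun x : S => ‖g j s x‖ ^ q) := by
      intro j s
      have hind : (fun x : S => ‖g j s x‖ ^ q)
          = Set.indicator {x : S | step (x : Fin d → ℤ) j s ∈ S}
              (fun x => ‖g j s x‖ ^ q) := by
        funext x
        rw [Set.indicator_apply]
        by_cases h : step (x : Fin d → ℤ) j s ∈ S
        · rw [if_pos (show x ∈ {x : S | step (x : Fin d → ℤ) j s ∈ S} from h)]
        · rw [if_neg (show x ∉ {x : S | step (x : Fin d → ℤ) j s ∈ S} from h)]
          have hz : g j s x = 0 := dif_neg h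
          rw [hz, norm_zero, Real.zero_rpow hq.ne']
      rw [hind, ← summable_subtype_iff_indicator]
      apply Summable.congr ((hψsum.comp_injective (einj j s)).mul_left (‖c j s‖ ^ q))
      intro t
      exact (hgt j s t).symm
    set G : Fin d → Bool → lp (fun _ : S => ℂ) 2 :=
      fun j s => ⟨g j s, memℓp_gen (hsum j s)⟩ with hGdef
    have hψnorm : ‖ψ‖ ^ q = ∑' y : S, ‖(ψ : ∀ _ : S, ℂ) y‖ ^ q :=
      lp.norm_rpow_eq_tsum hq ψ
    have hGnorm : ∀ (j : Fin d) (s : Bool), ‖G j s‖ ≤ (Real.exp ‖v‖ - 1) * ‖ψ‖ := by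
      intro j s
      have hGq : ‖G j s‖ ^ q = ∑' x : S, ‖g j s x‖ ^ q := lp.norm_rpow_eq_tsum hq (G j s)
      have hsub : ∑' x : S, ‖g j s x‖ ^ q
          = ∑' t : {x : S // step (x : Fin d → ℤ) j s ∈ S}, ‖g j s t.1‖ ^ q := by
        have hind : (fun x : S => ‖g j s x‖ ^ q)
            = Set.indicator {x : S | step (x : Fin d → ℤ) j s ∈ S}
                (fun x => ‖g j s x‖ ^ q) := by
          funext x
          rw [Set.indicator_apply]
          by_cases h : step (x : Fin d → ℤ) j s ∈ S
          · rw [if_pos (show x ∈ {x : S | step (x : Fin d → ℤ) j s ∈ S} from h)]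
          · rw [if_neg (show x ∉ {x : S | step (x : Fin d → ℤ) j s ∈ S} from h)]
            have hz : g j s x = 0 := dif_neg h
            rw [hz, norm_zero, Real.zero_rpow hq.ne']
        rw [hind, ← tsum_subtype]
        rfl
      have hle : ∑' x : S, ‖g j s x‖ ^ q ≤ ‖c j s‖ ^ q * ‖ψ‖ ^ q := by
        rw [hsub]
        have h1 : ∑' t : {x : S // step (x : Fin d → ℤ) j s ∈ S}, ‖g j s t.1‖ ^ q
            = ‖c j s‖ ^ q * ∑' t : {x : S // step (x : Fin d → ℤ) j s ∈ S},
                ‖(ψ : ∀ _ : S, ℂ) ⟨step ((t.1 : S) : Fin d → ℤ) j s, t.2⟩‖ ^ q := by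
          rw [← tsum_mul_left]
          exact tsum_congr (hgt j s)
        rw [h1, hψnorm]
        refine mul_le_mul_of_nonneg_left ?_ (Real.rpow_nonneg (norm_nonneg _) q)
        exact tsum_comp_le_tsum_of_inj hψsum
          (fun y => Real.rpow_nonneg (norm_nonneg _) q) (einj j s)
      have hGle : ‖G j s‖ ^ q ≤ (‖c j s‖ * ‖ψ‖) ^ q := by
        rw [hGq, Real.mul_rpow (norm_nonneg _) (norm_nonneg _)]
        exact hle
      have h2 : ‖G j s‖ ≤ ‖c j s‖ * ‖ψ‖ :=
        (Real.rpow_le_rpow_iff (norm_nonneg _)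
          (mul_nonneg (norm_nonneg _) (norm_nonneg _)) hq).1 hGle
      exact h2.trans (mul_le_mul_of_nonneg_right (coeff_bound v j s) (norm_nonneg ψ))
    have hdecomp : Bv' ψ = ∑ j : Fin d, ∑ s : Bool, G j s := by
      apply lp.ext
      funext x
      have hrhs : ((∑ j : Fin d, ∑ s : Bool, G j s : lp (fun _ : S => ℂ) 2) : ∀ _ : S, ℂ) x
          = ∑ j : Fin d, ∑ s : Bool, g j s x := by
        rw [lp.coeFn_sum, Finset.sum_apply]
        refine Finset.sum_congr rfl fun j _ => ?_
        rw [lp.coeFn_sum, Finset.sum_apply]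
      rw [hrhs, hB' ψ x]
    calc ‖Bv' ψ‖ = ‖∑ j : Fin d, ∑ s : Bool, G j s‖ := by rw [hdecomp]
      _ ≤ ∑ j : Fin d, ‖∑ s : Bool, G j s‖ := norm_sum_le _ _
      _ ≤ ∑ j : Fin d, ∑ s : Bool, ‖G j s‖ :=
          Finset.sum_le_sum fun j _ => norm_sum_le _ _
      _ ≤ ∑ _j : Fin d, ∑ _s : Bool, (Real.exp ‖v‖ - 1) * ‖ψ‖ :=
          Finset.sum_le_sum fun j _ => Finset.sum_le_sum fun s _ => hGnorm j s
      _ = 2 * d * (Real.exp ‖v‖ - 1) * ‖ψ‖ := by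
          simp [Finset.sum_const, Finset.card_univ]
          ring
end
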